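/- Let G be a finite simple graph with n vertices, maximum degree Δ, and chromatic number χ. Let I and J be independent sets of G with |I| = |J|, and let μ be an integer with 1 ≤ μ and 2μ ≤ |I|. If n − 2μ(Δ + 1) ≥ χ · (|I| − μ), then I and J are reconfigurable under (|I| − μ)-TJ; moreover, there is a reconfiguration sequence between them of length at most 3. -/

import Mathlib

/-- A set of vertices is independent: no two of its vertices are adjacent. -/
def IndepSet {α : Type*} (G : SimpleGraph α) (S : Finset α) : Prop :=
  ∀ ⦃u⦄, u ∈ S → ∀ ⦃v⦄, v ∈ S → ¬ G.Adj u v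

/-- `f 0, f 1, …, f ℓ` is a reconfiguration sequence of independent sets from `I` to `J`
under the `k`-Token-Jumping rule. -/
def IsTJSeq {α : Type*} [DecidableEq α] (G : SimpleGraph α) (k : ℕ) (I J : Finset α)
    (f : ℕ → Finset α) (ℓ : ℕ) : Prop :=
  f 0 = I ∧ f ℓ = J ∧ (∀ i ≤ ℓ, IndepSet G (f i) ∧ (f i).card = I.card) ∧
    ∀ i < ℓ, (symmDiff (f i) (f (i + 1))).card ≤ 2 * k

/-!
Choose `A ⊆ I` and `B ⊆ J` with `μ` elements each. The closed neighbourhood of `A ∪ B` has at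
most `2μ(Δ + 1)` vertices, so at least `χ(|I| - μ)` vertices lie outside it, and by pigeonhole one
colour class of a `χ`-colouring contains a set `C` of `|I| - μ` of them. Then `C` is independent
and has no neighbour in `A ∪ B`, so `I, A ∪ C, B ∪ C, J` is a `(|I| - μ)`-TJ sequence: each step
moves at most `|I| - μ` tokens, the middle one because `μ ≤ |I| - μ`.
-/

open Finset

section

variable {V : Type*} {G : SimpleGraph V}

theorem IndepSet.mono {S T : Finset V} (hS : IndepSet G S) (hT : T ⊆ S) : IndepSet G T :=
  fun _ hu _ hv => hS (hT hu) (hT hv)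

theorem IndepSet.union [DecidableEq V] {A C : Finset V} (hA : IndepSet G A) (hC : IndepSet G C)
    (hAC : ∀ a ∈ A, ∀ c ∈ C, ¬ G.Adj a c) : IndepSet G (A ∪ C) := by
  intro u hu v hv huv
  rcases mem_union.1 hu with hu | hu <;> rcases mem_union.1 hv with hv | hv
  · exact hA hu hv huv
  · exact hAC u hu v hv huv
  · exact hAC v hv u hu huv.symm
  · exact hC hu hv huv

theorem indepSet_filter_color {α : Type*} [DecidableEq α] (c : G.Coloring α) (S : Finset V)
    (a : α) : IndepSet G (S.filter fun v => c v = a) := by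
  intro u hu v hv huv
  exact c.valid huv ((mem_filter.1 hu).2.trans (mem_filter.1 hv).2.symm)

theorem exists_indepSet_subset_card_eq [Fintype V] {χ k : ℕ} (hG : G.Colorable χ)
    {S : Finset V} (hS : χ * k ≤ #S) (hk : k ≤ Fintype.card V) :
    ∃ C ⊆ S, IndepSet G C ∧ #C = k := by
  obtain ⟨c⟩ := hG
  rcases Nat.eq_zero_or_pos χ with rfl | hχ
  · have : IsEmpty V := ⟨fun v => (c v).elim0⟩
    refine ⟨∅, empty_subset S, fun _ h => absurd h (notMem_empty _), ?_⟩
    simp only [Fintype.card_eq_zero] at hk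
    simp [Nat.le_zero.1 hk]
  · obtain ⟨a, -, ha⟩ := exists_le_card_fiber_of_mul_le_card_of_maps_to (f := c)
      (fun v _ => mem_univ (c v)) (univ_nonempty_iff.2 ⟨⟨0, hχ⟩⟩) (by simpa using hS)
    obtain ⟨C, hC, rfl⟩ := exists_subset_card_eq ha
    exact ⟨C, hC.trans (filter_subset _ S), (indepSet_filter_color c S a).mono hC, rfl⟩

end

section

variable {V : Type*} [Fintype V] [DecidableEq V] (G : SimpleGraph V) [DecidableRel G.Adj]

def closedNbhd (s : Finset V) : Finset V :=
  s.biUnion fun a => insert a (G.neighborFinset a)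

theorem card_closedNbhd_le (s : Finset V) : #(closedNbhd G s) ≤ #s * (G.maxDegree + 1) := by
  refine card_biUnion_le_card_mul _ _ _ fun a _ => ?_
  calc #(insert a (G.neighborFinset a)) ≤ G.degree a + 1 := card_insert_le _ _
    _ ≤ G.maxDegree + 1 := Nat.succ_le_succ (G.degree_le_maxDegree a)

variable {G}

theorem disjoint_of_subset_compl_closedNbhd {s C : Finset V} (hC : C ⊆ (closedNbhd G s)ᶜ) :
    Disjoint s C :=
  disjoint_right.2 fun x hx hxs =>
    mem_compl.1 (hC hx) (mem_biUnion.2 ⟨x, hxs, mem_insert_self x _⟩)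

theorem not_adj_of_subset_compl_closedNbhd {s C : Finset V} (hC : C ⊆ (closedNbhd G s)ᶜ) :
    ∀ a ∈ s, ∀ c ∈ C, ¬ G.Adj a c := fun a ha c hc hac =>
  mem_compl.1 (hC hc)
    (mem_biUnion.2 ⟨a, ha, mem_insert_of_mem ((G.mem_neighborFinset a c).2 hac)⟩)

end

section

variable {V : Type*} [DecidableEq V]

theorem card_symmDiff_union_le {I A C : Finset V} (hA : A ⊆ I) :
    #(symmDiff I (A ∪ C)) ≤ #(I \ A) + #C := by
  refine (card_le_card fun x hx => ?_).trans (card_union_le (I \ A) C)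
  simp only [mem_symmDiff, mem_union, mem_sdiff, not_or] at hx ⊢
  have := @hA x
  tauto

theorem card_symmDiff_union_union_le (A B C : Finset V) :
    #(symmDiff (A ∪ C) (B ∪ C)) ≤ #A + #B := by
  refine (card_le_card fun x hx => ?_).trans (card_union_le A B)
  simp only [mem_symmDiff, mem_union, not_or] at hx ⊢
  tauto

theorem isTJSeq_of_four {G : SimpleGraph V} {k : ℕ} {I X Y J : Finset V}
    (hI : IndepSet G I) (hX : IndepSet G X) (hY : IndepSet G Y) (hJ : IndepSet G J)
    (hXc : #X = #I) (hYc : #Y = #I) (hJc : #J = #I) (hIX : #(symmDiff I X) ≤ 2 * k)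
    (hXY : #(symmDiff X Y) ≤ 2 * k) (hYJ : #(symmDiff Y J) ≤ 2 * k) :
    IsTJSeq G k I J (fun i => [I, X, Y, J].getD i J) 3 := by
  refine ⟨rfl, rfl, fun i hi => ?_, fun i hi => ?_⟩ <;> interval_cases i
  all_goals simp_all

end

theorem stmt4_general {V : Type*} [Fintype V] [DecidableEq V] (G : SimpleGraph V)
    [DecidableRel G.Adj] (Δ χ : ℕ) (hΔ : Δ = G.maxDegree)
    (hχ : G.chromaticNumber = (χ : ℕ∞))
    (I J : Finset V) (hI : IndepSet G I) (hJ : IndepSet G J) (hIJ : I.card = J.card)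
    (μ : ℕ) (hμ2 : 2 * μ ≤ I.card)
    (hmain : χ * (I.card - μ) + 2 * μ * (Δ + 1) ≤ Fintype.card V) :
    ∃ (f : ℕ → Finset V) (ℓ : ℕ), ℓ ≤ 3 ∧ IsTJSeq G (I.card - μ) I J f ℓ := by
  obtain ⟨A, hAI, hA⟩ := exists_subset_card_eq (show μ ≤ #I by omega)
  obtain ⟨B, hBJ, hB⟩ := exists_subset_card_eq (show μ ≤ #J by omega)
  have hN : #(closedNbhd G (A ∪ B)) ≤ 2 * μ * (Δ + 1) := by
    have := card_union_le A B
    calc #(closedNbhd G (A ∪ B)) ≤ #(A ∪ B) * (Δ + 1) := hΔ ▸ card_closedNbhd_le G _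
      _ ≤ 2 * μ * (Δ + 1) := Nat.mul_le_mul_right _ (by omega)
  have hcol : G.Colorable χ := by rw [← SimpleGraph.chromaticNumber_le_iff_colorable, hχ]
  obtain ⟨C, hCN, hC, hCk⟩ := exists_indepSet_subset_card_eq hcol
    (S := (closedNbhd G (A ∪ B))ᶜ) (k := #I - μ) (by rw [card_compl]; omega)
    (by have := card_le_univ I; omega)
  have hdisj := disjoint_of_subset_compl_closedNbhd hCN
  have hnadj := not_adj_of_subset_compl_closedNbhd hCN
  have hAC : IndepSet G (A ∪ C) :=
    (hI.mono hAI).union hC fun a ha => hnadj a (mem_union_left B ha)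
  have hBC : IndepSet G (B ∪ C) :=
    (hJ.mono hBJ).union hC fun b hb => hnadj b (mem_union_right A hb)
  refine ⟨_, 3, le_rfl, isTJSeq_of_four hI hAC hBC hJ ?_ ?_ hIJ.symm ?_ ?_ ?_⟩
  · rw [card_union_of_disjoint (hdisj.mono_left subset_union_left)]; omega
  · rw [card_union_of_disjoint (hdisj.mono_left subset_union_right)]; omega
  · have := card_symmDiff_union_le (C := C) hAI
    rw [card_sdiff_of_subset hAI] at this; omega
  · have := card_symmDiff_union_union_le A B C; omega
  · have := card_symmDiff_union_le (C := C) hBJ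
    rw [symmDiff_comm, card_sdiff_of_subset hBJ] at this; omega

theorem stmt4 {V : Type*} [Fintype V] [DecidableEq V] (G : SimpleGraph V)
    [DecidableRel G.Adj] (Δ χ : ℕ) (hΔ : Δ = G.maxDegree)
    (hχ : G.chromaticNumber = (χ : ℕ∞))
    (I J : Finset V) (hI : IndepSet G I) (hJ : IndepSet G J) (hIJ : I.card = J.card)
    (μ : ℕ) (hμ1 : 1 ≤ μ) (hμ2 : 2 * μ ≤ I.card)
    (hmain : χ * (I.card - μ) + 2 * μ * (Δ + 1) ≤ Fintype.card V) :
    ∃ (f : ℕ → Finset V) (ℓ : ℕ), ℓ ≤ 3 ∧ IsTJSeq G (I.card - μ) I J f ℓ :=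
  stmt4_general G Δ χ hΔ hχ I J hI hJ hIJ μ hμ2 hmain
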